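/- arXiv:1111.6546 — 5 statements merged into one kernel-verified Lean document; each statement's English description precedes it below -/
import Mathlib

section
/- Let A be a unital ℂ-algebra with automorphism σ, let φ : A → ℂ be a linear functional satisfying the twisted trace property φ(xy) = φ(σ(y)x) for all x, y ∈ A, and let F ∈ A with F² = 1 and σ(F) = F. For n ∈ ℕ define the (n+1)-linear functional ch(x₀,…,xₙ) = φ(F[F,x₀][F,x₁]⋯[F,xₙ]). Then ch is twisted-cyclic: ch(x₀,…,xₙ) = (-1)^n ch(σ(xₙ), x₀, …, xₙ₋₁) for all x₀,…,xₙ ∈ A. -/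
/-! Since `F² = 1`, `F` anticommutes with every commutator `[F, a]`, so `F · Q = (-1)ᵏ Q · F` for a
product `Q` of `k` commutators. Moving the last commutator `[F, xₙ]` around the twisted trace turns
it into `[F, σ xₙ]` in front, at the cost of one sign from passing it across `F`. This gives
`ch(x₀,…,xₙ) = -φ(F Q)` with `Q = [F, σ xₙ][F, x₀]⋯[F, xₙ₋₁]`; and since `σ F = F`, the twisted
trace property also gives `φ(F Q) = φ(Q F) = (-1)ⁿ⁺¹ φ(F Q)`, which turns `-1` into `(-1)ⁿ`. -/

section Ring

variable {A : Type*} [Ring A]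

theorem mul_lie_eq_neg_lie_mul {F : A} (hF : F * F = 1) (a : A) :
    F * ⁅F, a⁆ = -(⁅F, a⁆ * F) := by
  simp only [Ring.lie_def, mul_sub, sub_mul, ← mul_assoc, hF, one_mul, neg_sub]
  rw [mul_assoc a F F, hF, mul_one]

theorem mul_list_prod_of_forall_anticomm {F : A} {l : List A}
    (h : ∀ y ∈ l, F * y = -(y * F)) : F * l.prod = (-1) ^ l.length * (l.prod * F) := by
  induction l with
  | nil => simp
  | cons y t ih =>
    have hy := h y List.mem_cons_self
    have ht := ih fun z hz => h z (List.mem_cons_of_mem y hz)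
    rw [List.prod_cons, List.length_cons, ← mul_assoc, hy, neg_mul, mul_assoc, ht, ← mul_assoc y,
      ← ((Commute.neg_one_left y).pow_left _).eq, pow_succ, mul_neg_one, neg_mul]
    simp only [mul_assoc]

theorem mul_prod_map_lie_of_mul_self {F : A} (hF : F * F = 1) (l : List A) :
    F * (l.map (⁅F, ·⁆)).prod = (-1) ^ l.length * ((l.map (⁅F, ·⁆)).prod * F) := by
  rw [mul_list_prod_of_forall_anticomm, List.length_map]
  simp only [List.mem_map, forall_exists_index, and_imp, forall_apply_eq_imp_iff₂]
  exact fun a _ => mul_lie_eq_neg_lie_mul hF a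

end Ring

theorem LinearMap.map_neg_one_pow_mul {R A : Type*} [CommRing R] [Ring A] [Algebra R A]
    (φ : A →ₗ[R] R) (k : ℕ) (a : A) : φ ((-1) ^ k * a) = (-1) ^ k * φ a := by
  have : (-1 : A) ^ k = algebraMap R A ((-1) ^ k) := by simp
  rw [this, ← Algebra.smul_def, map_smul, smul_eq_mul]

section TwistedTrace

variable {R A : Type*} [CommRing R] [Ring A] [Algebra R A] {σ : A ≃ₐ[R] A} {φ : A →ₗ[R] R}
  {F : A}

theorem twisted_trace_mul_eq_neg_one_pow_mul (hφ : ∀ x y : A, φ (x * y) = φ (σ y * x))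
    (hσF : σ F = F) {Q : A} {k : ℕ} (hFQ : F * Q = (-1) ^ k * (Q * F)) :
    φ (F * Q) = (-1) ^ k * φ (F * Q) :=
  calc φ (F * Q) = φ ((-1) ^ k * (Q * F)) := by rw [hFQ]
    _ = (-1) ^ k * φ (Q * F) := φ.map_neg_one_pow_mul k _
    _ = (-1) ^ k * φ (F * Q) := by rw [hφ, hσF]

theorem twisted_trace_mul_mul_lie (hφ : ∀ x y : A, φ (x * y) = φ (σ y * x))
    (hσF : σ F = F) (hF : F * F = 1) (P a : A) :
    φ (F * (P * ⁅F, a⁆)) = -φ (F * (⁅F, σ a⁆ * P)) := by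
  have hσ : σ ⁅F, a⁆ = ⁅F, σ a⁆ := by simp only [Ring.lie_def, map_sub, map_mul, hσF]
  rw [← mul_assoc, hφ, hσ, ← mul_assoc, ← neg_neg (⁅F, σ a⁆ * F), ← mul_lie_eq_neg_lie_mul hF,
    neg_mul, map_neg, mul_assoc]

end TwistedTrace

/-- For a σ-twisted trace `φ` and a σ-invariant symmetry `F`
(`F² = 1`), the character `ch(x₀,…,xₙ) = φ(F[F,x₀]⋯[F,xₙ])` is twisted-cyclic:
`ch(x₀,…,xₙ) = (-1)ⁿ ch(σ(xₙ), x₀, …, xₙ₋₁)`. -/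
theorem stmt_7 {A : Type*} [Ring A] [Algebra ℂ A] (σ : A ≃ₐ[ℂ] A)
    (φ : A →ₗ[ℂ] ℂ) (hφ : ∀ x y : A, φ (x * y) = φ (σ y * x))
    (F : A) (hF : F * F = 1) (hσF : σ F = F)
    (n : ℕ) (x : Fin (n + 1) → A) :
    φ (F * (List.ofFn fun i : Fin (n + 1) => F * x i - x i * F).prod) =
      (-1 : ℂ) ^ n *
        φ (F * ((F * σ (x (Fin.last n)) - σ (x (Fin.last n)) * F) *
          (List.ofFn fun i : Fin n => F * x i.castSucc - x i.castSucc * F).prod)) := by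
  simp only [← Ring.lie_def]
  rw [List.ofFn_succ', List.prod_concat, twisted_trace_mul_mul_lie hφ hσF hF]
  set Q := ⁅F, σ (x (Fin.last n))⁆ * (List.ofFn fun i : Fin n => ⁅F, x i.castSucc⁆).prod
  have hFQ : F * Q = (-1) ^ (n + 1) * (Q * F) := by
    simpa only [List.map_cons, List.prod_cons, List.map_ofFn, List.length_cons,
      List.length_ofFn, Function.comp_def] using
      mul_prod_map_lie_of_mul_self hF (σ (x (Fin.last n)) :: List.ofFn (x ∘ Fin.castSucc))
  have hself := twisted_trace_mul_eq_neg_one_pow_mul hφ hσF hFQ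
  rw [pow_succ] at hself
  linear_combination -hself
end

section
/- Let A be a unital ℂ-algebra with automorphism σ, φ : A → ℂ a linear functional with φ(xy) = φ(σ(y)x) for all x,y, and F ∈ A with F² = 1, σ(F) = F. Then for all y, x₀, …, xₙ ∈ A with n odd: φ([F,y][F,x₀]⋯[F,xₙ]) = −φ(yF[F,x₀]⋯[F,xₙ]) + (−1)^{n+1} φ(y[F,x₀]⋯[F,xₙ]F) = 0. -/
lemma anticomm_prod {A : Type*} [Ring A] (F : A) :
    ∀ l : List A, (∀ c ∈ l, F * c = -(c * F)) →
      F * l.prod = (-1 : A) ^ l.length * (l.prod * F) := by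
  intro l
  induction l with
  | nil => intro _; simp
  | cons c t ih =>
      intro h
      have hc : F * c = -(c * F) := h c List.mem_cons_self
      have ht := ih (fun d hd => h d (List.mem_cons_of_mem _ hd))
      simp only [List.prod_cons, List.length_cons, pow_succ]
      calc F * (c * t.prod) = (F * c) * t.prod := by noncomm_ring
        _ = -(c * (F * t.prod)) := by rw [hc]; noncomm_ring
        _ = -(c * ((-1 : A) ^ t.length * (t.prod * F))) := by rw [ht]
        _ = (-1 : A) ^ t.length * -1 * (c * t.prod * F) := by
              rw [← mul_assoc c, ((Commute.neg_one_right c).pow_right t.length).eq,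
                mul_assoc]
              noncomm_ring

/-- For a σ-twisted trace `φ` and a σ-invariant symmetry `F`, with
`n` odd, setting `Π = [F,x₀]⋯[F,xₙ]` one has
`φ([F,y]·Π) = -φ(yF·Π) + (-1)^{n+1} φ(y·Π·F)` and `φ([F,y]·Π) = 0`. -/
theorem stmt_8 {A : Type*} [Ring A] [Algebra ℂ A] (σ : A ≃ₐ[ℂ] A)
    (φ : A →ₗ[ℂ] ℂ) (hφ : ∀ x y : A, φ (x * y) = φ (σ y * x))
    (F : A) (hF : F * F = 1) (hσF : σ F = F)
    (n : ℕ) (hn : Odd n) (y : A) (x : Fin (n + 1) → A) :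
    φ ((F * y - y * F) * (List.ofFn fun i : Fin (n + 1) => F * x i - x i * F).prod) =
      -φ (y * F * (List.ofFn fun i : Fin (n + 1) => F * x i - x i * F).prod) +
      (-1 : ℂ) ^ (n + 1) *
        φ (y * (List.ofFn fun i : Fin (n + 1) => F * x i - x i * F).prod * F) ∧
    φ ((F * y - y * F) * (List.ofFn fun i : Fin (n + 1) => F * x i - x i * F).prod) = 0 := by
  set L := (List.ofFn fun i : Fin (n + 1) => F * x i - x i * F) with hL
  set P := L.prod with hP
  have heven : Even (n + 1) := hn.add_one
  have hsign : ((-1 : ℂ)) ^ (n + 1) = 1 := heven.neg_one_pow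
  -- cyclic swap: φ(F * z) = φ(z * F)
  have hcyc : ∀ z : A, φ (F * z) = φ (z * F) := fun z => by
    rw [hφ z F, hσF]
  have hlen : L.length = n + 1 := by simp [hL]
  have hFP : F * P = P * F := by
    have := anticomm_prod F L (by
      intro c hc
      rw [hL] at hc
      obtain ⟨i, rfl⟩ := List.mem_ofFn.1 hc
      have : F * (F * x i - x i * F) = F * F * x i - F * x i * F := by noncomm_ring
      rw [this, hF]
      have : -((F * x i - x i * F) * F) = x i * (F * F) - F * x i * F := by noncomm_ring
      rw [this, hF]
      noncomm_ring)
    rw [hlen, heven.neg_one_pow, one_mul] at this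
    exact this
  have key : φ ((F * y - y * F) * P) = φ (y * P * F) - φ (y * F * P) := by
    have : (F * y - y * F) * P = F * (y * P) - y * F * P := by noncomm_ring
    rw [this, map_sub, hcyc (y * P)]
  constructor
  · rw [key, hsign, one_mul]; ring
  · rw [key]
    have : y * F * P = y * P * F := by rw [mul_assoc, hFP, mul_assoc]
    rw [this, sub_self]
end

section
/- Let A be a unital ℂ-algebra with automorphism σ, φ a σ-twisted trace (φ(xy) = φ(σ(y)x)), and F ∈ A with F² = 1, σ(F) = F. Define ch(x₀,…,xₙ) = ½ φ(F[F,x₀]⋯[F,xₙ]) for n odd. Then ch is a twisted Hochschild cocycle: for all x₀,…,xₙ,y ∈ A, Σ_{i=0}^{n} (-1)^i ch(…, xᵢ·xᵢ₊₁, …) + (-1)^{n+1} ch(σ(y)x₀, x₁, …, xₙ) = 0, where the arguments are (x₀,…,xₙ,y) and xₙ₊₁ := y; i.e. ch ∘ b_σ = 0. -/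
/-- The `i`-th Hochschild face of an `(n+2)`-tuple: multiply the `i`-th and
`(i+1)`-st entries. -/
def chFace {A : Type*} [Ring A] {n : ℕ} (a : Fin (n + 2) → A) (i : Fin (n + 1)) :
    Fin (n + 1) → A := fun j =>
  if (j : ℕ) < (i : ℕ) then a j.castSucc
  else if (j : ℕ) = (i : ℕ) then a j.castSucc * a j.succ
  else a j.succ

/-- The twisted cyclic face: `σ(a_{n+1})·a₀ ⊗ a₁ ⊗ ⋯ ⊗ aₙ`. -/
def chCyc {A : Type*} [Ring A] (s : A → A) {n : ℕ} (a : Fin (n + 2) → A) :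
    Fin (n + 1) → A := fun j =>
  if (j : ℕ) = 0 then s (a (Fin.last (n + 1))) * a 0 else a j.castSucc

namespace Stmt9

variable {A : Type*} [Ring A] [Algebra ℂ A]

def dd (F x : A) : A := F * x - x * F

def dp (F : A) (l : List A) : A := (l.map (dd F)).prod

@[simp] lemma dp_nil (F : A) : dp F [] = 1 := rfl

@[simp] lemma dp_cons (F x : A) (l : List A) : dp F (x :: l) = dd F x * dp F l := by
  simp [dp]

lemma dp_append (F : A) (l₁ l₂ : List A) : dp F (l₁ ++ l₂) = dp F l₁ * dp F l₂ := by
  simp [dp]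

lemma dd_mul (F x y : A) : dd F (x * y) = dd F x * y + x * dd F y := by
  simp only [dd]; noncomm_ring

lemma F_dd {F : A} (hF : F * F = 1) (x : A) : F * dd F x = -(dd F x * F) := by
  simp only [dd, mul_sub, sub_mul, ← mul_assoc, hF, one_mul]
  rw [mul_assoc x F F, hF, mul_one, mul_assoc]
  abel

lemma F_dp {F : A} (hF : F * F = 1) : ∀ l : List A,
    F * dp F l = (-1 : ℂ) ^ l.length • (dp F l * F)
  | [] => by simp
  | x :: l => by
    rw [dp_cons, ← mul_assoc, F_dd hF, neg_mul, mul_assoc, F_dp hF l, mul_smul_comm,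
      List.length_cons, pow_succ, mul_smul, neg_one_smul, mul_assoc]
    simp

def faceSum (F : A) : List A → A
  | [] => 0
  | [_] => 0
  | x :: y :: l => dp F ((x * y) :: l) - dd F x * faceSum F (y :: l)

lemma faceSum_eq (F : A) : ∀ (l : List A) (x y : A),
    faceSum F (x :: (l ++ [y])) =
      x * dp F (l ++ [y]) + (-1 : ℂ) ^ l.length • (dp F (x :: l) * y)
  | [], x, y => by
    simp [faceSum, dd_mul, add_comm]
  | z :: l, x, y => by
    have ih := faceSum_eq F l z y
    show dp F ((x * z) :: (l ++ [y])) - dd F x * faceSum F (z :: (l ++ [y])) = _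
    rw [ih, dp_cons, dd_mul, List.length_cons, pow_succ]
    simp only [dp_cons, List.cons_append, mul_add, add_mul, mul_smul_comm, mul_smul,
      neg_one_smul, mul_assoc, smul_smul]
    module

end Stmt9

namespace Stmt9
variable {A : Type*} [Ring A] [Algebra ℂ A]

lemma ofFn_chFace_zero {n : ℕ} (a : Fin (n + 2) → A) :
    List.ofFn (chFace a 0) = (a 0 * a 1) :: List.ofFn (fun j : Fin n => a j.succ.succ) := by
  have h0 : chFace a 0 0 = a 0 * a 1 := by simp [chFace]
  have ht : (fun j : Fin n => chFace a 0 j.succ) = fun j => a j.succ.succ := by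
    funext j; simp [chFace]
  rw [List.ofFn_succ, h0, ht]

lemma ofFn_chFace_succ {n : ℕ} (a : Fin (n + 3) → A) (i : Fin (n + 1)) :
    List.ofFn (chFace a i.succ) =
      a 0 :: List.ofFn (chFace (fun j : Fin (n + 2) => a j.succ) i) := by
  have h0 : chFace a i.succ 0 = a 0 := by simp [chFace]
  have ht : (fun j : Fin (n + 1) => chFace a i.succ j.succ)
      = chFace (fun j : Fin (n + 2) => a j.succ) i := by
    funext j
    have e1 : (j.succ.castSucc : Fin (n + 3)) = j.castSucc.succ := by ext; simp
    simp only [chFace, Fin.val_succ, Nat.add_lt_add_iff_right, Nat.add_right_cancel_iff, e1]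
  rw [List.ofFn_succ, h0, ht]

lemma faces_sum (F : A) : ∀ (n : ℕ) (a : Fin (n + 2) → A),
    ∑ i : Fin (n + 1), (-1 : ℂ) ^ (i : ℕ) • dp F (List.ofFn (chFace a i)) =
      faceSum F (List.ofFn a)
  | 0, a => by
    rw [Fin.sum_univ_one, ofFn_chFace_zero]
    have : List.ofFn a = [a 0, a 1] := by
      simp [List.ofFn_succ, Fin.succ_zero_eq_one]
    rw [this]
    simp [faceSum]
  | n + 1, a => by
    have IH := faces_sum F n (fun j : Fin (n + 2) => a j.succ)
    have ha' : List.ofFn (fun j : Fin (n + 2) => a j.succ)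
        = a 1 :: List.ofFn (fun j : Fin (n + 1) => a j.succ.succ) := by
      rw [List.ofFn_succ]; simp [Fin.succ_zero_eq_one]
    have ha : List.ofFn a = a 0 :: a 1 :: List.ofFn (fun j : Fin (n + 1) => a j.succ.succ) := by
      rw [List.ofFn_succ, ha']
    have hterm : ∀ i : Fin (n + 1), (-1 : ℂ) ^ ((i.succ : Fin (n + 2)) : ℕ) •
          dp F (List.ofFn (chFace a i.succ))
        = -(dd F (a 0) * ((-1 : ℂ) ^ (i : ℕ) •
            dp F (List.ofFn (chFace (fun j : Fin (n + 2) => a j.succ) i)))) := by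
      intro i
      rw [ofFn_chFace_succ, dp_cons, Fin.val_succ, pow_succ, mul_smul, neg_one_smul,
        smul_neg, ← mul_smul_comm]
    rw [Fin.sum_univ_succ, Finset.sum_congr rfl (fun i _ => hterm i), Finset.sum_neg_distrib,
      ← Finset.mul_sum, IH, ofFn_chFace_zero, ha]
    rw [show faceSum F (a 0 :: a 1 :: List.ofFn fun j : Fin (n + 1) => a j.succ.succ)
        = dp F ((a 0 * a 1) :: List.ofFn fun j : Fin (n + 1) => a j.succ.succ)
          - dd F (a 0) * faceSum F (a 1 :: List.ofFn fun j : Fin (n + 1) => a j.succ.succ)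
        from rfl, ← ha']
    simp [sub_eq_add_neg]
end Stmt9

namespace Stmt9
variable {A : Type*} [Ring A] [Algebra ℂ A]

lemma final {F : A} (hF : F * F = 1) (σ : A ≃ₐ[ℂ] A) (φ : A →ₗ[ℂ] ℂ)
    (hφ : ∀ x y : A, φ (x * y) = φ (σ y * x)) (hσF : σ F = F)
    (x0 z M : A) (hFM : F * (dd F x0 * M) = dd F x0 * M * F) :
    φ (F * (x0 * (M * dd F z))) - φ (F * (dd F x0 * M * z))
      + φ (F * (dd F (σ z * x0) * M)) = 0 := by
  have hσd : ∀ x : A, σ (dd F x) = dd F (σ x) := by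
    intro x; simp [dd, hσF]
  have h1 : φ (F * (x0 * (M * dd F z))) = φ (dd F (σ z) * (F * (x0 * M))) := by
    have e : F * (x0 * (M * dd F z)) = (F * (x0 * M)) * dd F z := by noncomm_ring
    rw [e, hφ, hσd]
  have h3 : φ (F * (dd F (σ z) * (x0 * M))) = - φ (dd F (σ z) * (F * (x0 * M))) := by
    have e : F * (dd F (σ z) * (x0 * M)) = (F * dd F (σ z)) * (x0 * M) := by noncomm_ring
    rw [e, F_dd hF, neg_mul, map_neg, mul_assoc]
  have h2 : φ (F * (dd F x0 * M * z)) = φ (F * (σ z * (dd F x0 * M))) := by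
    have e : F * (dd F x0 * M * z) = (F * (dd F x0 * M)) * z := by noncomm_ring
    rw [e, hφ, hFM]
    have e2 : σ z * (dd F x0 * M * F) = (σ z * (dd F x0 * M)) * F := by noncomm_ring
    rw [e2, hφ, hσF]
  have h4 : F * (dd F (σ z * x0) * M)
      = F * (dd F (σ z) * (x0 * M)) + F * (σ z * (dd F x0 * M)) := by
    rw [dd_mul]; noncomm_ring
  rw [h4, map_add, h1, h2, h3]
  ring

end Stmt9

/-- `ch(x₀,…,xₙ) = ½ φ(F[F,x₀]⋯[F,xₙ])` (n odd) is a twisted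
Hochschild cocycle: `ch ∘ b_σ = 0`. -/
theorem stmt_9 {A : Type*} [Ring A] [Algebra ℂ A] (σ : A ≃ₐ[ℂ] A)
    (φ : A →ₗ[ℂ] ℂ) (hφ : ∀ x y : A, φ (x * y) = φ (σ y * x))
    (F : A) (hF : F * F = 1) (hσF : σ F = F)
    (n : ℕ) (hn : Odd n)
    (ch : (Fin (n + 1) → A) → ℂ)
    (hch : ∀ v : Fin (n + 1) → A,
      ch v = (1 / 2 : ℂ) * φ (F * (List.ofFn fun j : Fin (n + 1) => F * v j - v j * F).prod))
    (a : Fin (n + 2) → A) :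
    (∑ i : Fin (n + 1), (-1 : ℂ) ^ (i : ℕ) * ch (chFace a i)) +
      (-1 : ℂ) ^ (n + 1) * ch (chCyc σ a) = 0 := by
  have hch' : ∀ v : Fin (n + 1) → A,
      ch v = (1 / 2 : ℂ) * φ (F * Stmt9.dp F (List.ofFn v)) := by
    intro v; rw [hch]; congr 2
    rw [Stmt9.dp, List.map_ofFn]; rfl
  have hn1 : ((-1 : ℂ)) ^ (n + 1) = 1 := Even.neg_one_pow hn.add_one
  have hn2 : ((-1 : ℂ)) ^ n = -1 := Odd.neg_one_pow hn
  have hfaces : (∑ i : Fin (n + 1), (-1 : ℂ) ^ (i : ℕ) * ch (chFace a i))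
      = (1 / 2 : ℂ) * φ (F * Stmt9.faceSum F (List.ofFn a)) := by
    rw [← Stmt9.faces_sum F n a]
    simp only [hch', Finset.mul_sum, mul_smul_comm, map_sum, map_smul, smul_eq_mul]
    exact Finset.sum_congr rfl fun i _ => by ring
  have hC : List.ofFn (chCyc σ a)
      = (σ (a (Fin.last (n + 1))) * a 0) :: List.ofFn (fun j : Fin n => a j.castSucc.succ) := by
    have h0 : chCyc σ a 0 = σ (a (Fin.last (n + 1))) * a 0 := by simp [chCyc]
    have ht : (fun j : Fin n => chCyc σ a j.succ) = fun j => a j.castSucc.succ := by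
      funext j
      have e : (j.succ.castSucc : Fin (n + 2)) = j.castSucc.succ := by ext; simp
      simp [chCyc, e]
    rw [List.ofFn_succ, h0, ht]
  have hA : List.ofFn a
      = a 0 :: (List.ofFn (fun j : Fin n => a j.castSucc.succ) ++ [a (Fin.last (n + 1))]) := by
    have hlast : (Fin.last n).succ = Fin.last (n + 1) := by ext; simp
    rw [List.ofFn_succ]
    congr 1
    simp only [List.ofFn_succ', List.concat_eq_append, hlast]
  have htel := Stmt9.faceSum_eq F (List.ofFn (fun j : Fin n => a j.castSucc.succ)) (a 0)
    (a (Fin.last (n + 1)))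
  rw [List.length_ofFn] at htel
  have hcyc : ch (chCyc σ a) = (1 / 2 : ℂ) *
      φ (F * (Stmt9.dd F (σ (a (Fin.last (n + 1))) * a 0) *
        Stmt9.dp F (List.ofFn (fun j : Fin n => a j.castSucc.succ)))) := by
    rw [hch', hC, Stmt9.dp_cons]
  have hFM : F * (Stmt9.dd F (a 0) * Stmt9.dp F (List.ofFn (fun j : Fin n => a j.castSucc.succ)))
      = (Stmt9.dd F (a 0) * Stmt9.dp F (List.ofFn (fun j : Fin n => a j.castSucc.succ))) * F := by
    have h := Stmt9.F_dp hF (a 0 :: List.ofFn (fun j : Fin n => a j.castSucc.succ))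
    rw [Stmt9.dp_cons, List.length_cons, List.length_ofFn, hn1, one_smul] at h
    exact h
  have hfin := Stmt9.final hF σ φ hφ hσF (a 0) (a (Fin.last (n + 1))) _ hFM
  rw [hfaces, hA, htel, hcyc, hn1, one_mul]
  simp only [Stmt9.dp_append, Stmt9.dp_cons, Stmt9.dp_nil, mul_one, mul_add, mul_smul_comm,
    map_add, map_smul, smul_eq_mul, hn2]
  linear_combination (1 / 2 : ℂ) * hfin
end

section
/- Let 0 < q < 1. Then Σ_{k=0}^{∞} Σ_{n,m} q^{2l+1−2n}·(1 − q^{2l+1})^{−1}·q^{l+1/2}, where l = k/2 and n, m range over the 2l+1 values −l, −l+1, …, l, converges and equals (1/(q^{−1} − q))·( q^{1/2}/(1 − q^{1/2})² + q^{3/2}/(1 − q^{3/2})² ); equivalently, Σ_{k=0}^{∞} (k+1)·q^{3(k+1)/2}·[k+1]_q·(1 − q^{k+1})^{−1}, with [k+1]_q = Σ_{j=0}^{k} q^{k−2j}, converges and equals this closed form. -/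
set_option maxHeartbeats 1000000


/-- For `0 < q < 1`, the trace of the operator `R` over quantum
SU(2), i.e. the sum `Σ_{k=0}^{∞} (k+1)·q^{3(k+1)/2}·[k+1]_q·(1 − q^{k+1})⁻¹`
with `[k+1]_q = Σ_{j=0}^{k} q^{k−2j}`, converges and equals
`(1/(q⁻¹ − q))·(q^{1/2}/(1 − q^{1/2})² + q^{3/2}/(1 − q^{3/2})²)`. -/
theorem stmt_14 (q : ℝ) (hq0 : 0 < q) (hq1 : q < 1) :
    HasSum
      (fun k : ℕ =>
        ((k : ℝ) + 1) * q ^ (3 * ((k : ℝ) + 1) / 2) *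
          (∑ j ∈ Finset.range (k + 1), q ^ ((k : ℤ) - 2 * (j : ℤ))) *
          (1 - q ^ (k + 1))⁻¹)
      ((1 / (q⁻¹ - q)) *
        (q ^ ((1 : ℝ) / 2) / (1 - q ^ ((1 : ℝ) / 2)) ^ 2 +
          q ^ ((3 : ℝ) / 2) / (1 - q ^ ((3 : ℝ) / 2)) ^ 2)) := by
  have hqne : q ≠ 0 := hq0.ne'
  set s : ℝ := q ^ ((1 : ℝ) / 2) with hs
  have hs0 : 0 < s := Real.rpow_pos_of_pos hq0 _
  have hs1 : s < 1 := Real.rpow_lt_one hq0.le hq1 (by norm_num)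
  have hsq : s ^ 2 = q := by
    rw [hs, ← Real.rpow_natCast (q ^ ((1 : ℝ) / 2)) 2, ← Real.rpow_mul hq0.le]
    norm_num
  have hs3 : q ^ ((3 : ℝ) / 2) = s ^ 3 := by
    rw [hs, ← Real.rpow_natCast (q ^ ((1 : ℝ) / 2)) 3, ← Real.rpow_mul hq0.le]
    norm_num
  have hq2lt : q ^ 2 < 1 := by nlinarith
  have hq2ne : (1 : ℝ) - q ^ 2 ≠ 0 := by linarith
  have hq2ne' : (q : ℝ) ^ 2 ≠ 1 := by intro h; exact hq2ne (by linarith)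
  -- geometric sum evaluation
  have hG : ∀ k : ℕ, (∑ j ∈ Finset.range (k + 1), q ^ ((k : ℤ) - 2 * (j : ℤ)))
      = (q ^ k)⁻¹ * ((1 - (q ^ 2) ^ (k + 1)) / (1 - q ^ 2)) := by
    intro k
    have h1 : ∀ j ∈ Finset.range (k + 1),
        q ^ ((k : ℤ) - 2 * (j : ℤ)) = (q ^ k)⁻¹ * (q ^ 2) ^ (k - j) := by
      intro j hj
      have hjk : j ≤ k := Nat.lt_succ_iff.mp (Finset.mem_range.mp hj)
      rw [← zpow_natCast (q ^ 2) (k - j), ← zpow_natCast q k, ← zpow_neg, ← zpow_natCast q 2,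
        ← zpow_mul, ← zpow_add₀ hqne]
      congr 1
      push_cast [hjk]
      ring
    rw [Finset.sum_congr rfl h1, ← Finset.mul_sum]
    congr 1
    have hre : ∑ i ∈ Finset.range (k + 1), (q ^ 2) ^ (k - i)
        = ∑ i ∈ Finset.range (k + 1), (q ^ 2) ^ i := by
      simpa using Finset.sum_range_reflect (fun i => (q ^ 2) ^ i) (k + 1)
    rw [hre, geom_sum_eq hq2ne']
    rw [div_eq_div_iff (by intro h; exact hq2ne' (by linarith)) hq2ne]
    ring
  -- termwise identity
  have hqinv : q⁻¹ - q ≠ 0 := by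
    have h1 : 1 < q⁻¹ := one_lt_inv₀ hq0 |>.mpr hq1
    intro h; nlinarith
  have hrpow : ∀ k : ℕ, q ^ (3 * ((k : ℝ) + 1) / 2) = s ^ (3 * (k + 1)) := by
    intro k
    rw [hs, ← Real.rpow_natCast (q ^ ((1 : ℝ) / 2)) (3 * (k + 1)), ← Real.rpow_mul hq0.le]
    congr 1
    push_cast
    ring
  have hterm : ∀ k : ℕ,
      ((k : ℝ) + 1) * q ^ (3 * ((k : ℝ) + 1) / 2) *
          (∑ j ∈ Finset.range (k + 1), q ^ ((k : ℤ) - 2 * (j : ℤ))) *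
          (1 - q ^ (k + 1))⁻¹
      = (1 / (q⁻¹ - q)) * (((k : ℝ) + 1) * s ^ (k + 1) + ((k : ℝ) + 1) * (s ^ 3) ^ (k + 1)) := by
    intro k
    rw [hG k, hrpow k]
    have hk3 : s ^ (3 * (k + 1)) = (s ^ (k + 1)) ^ 3 := by
      rw [← pow_mul]; ring_nf
    have hqk : q ^ k * s ^ 2 = (s ^ (k + 1)) ^ 2 := by
      rw [← hsq, ← pow_mul, ← pow_mul, ← pow_add]; ring_nf
    have hqk1'' : q ^ (k + 1) = (s ^ (k + 1)) ^ 2 := by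
      rw [← hsq, ← pow_mul, ← pow_mul]; ring_nf
    have hq2k : (q ^ 2) ^ (k + 1) = (s ^ (k + 1)) ^ 4 := by
      rw [← hsq, ← pow_mul, ← pow_mul, ← pow_mul]; ring_nf
    have hqinv' : q⁻¹ - q = (1 - s ^ 4) / s ^ 2 := by
      rw [← hsq]; field_simp
    have hqkq : q ^ k = (s ^ (k + 1)) ^ 2 / s ^ 2 := by
      rw [← hqk]; field_simp
    have hq2s : (1 : ℝ) - q ^ 2 = 1 - s ^ 4 := by rw [← hsq]; ring
    rw [hk3, hqkq, hqk1'', hq2k, hqinv', hq2s]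
    set a := s ^ (k + 1) with ha
    have ha0 : 0 < a := pow_pos hs0 _
    have ha1 : a < 1 := pow_lt_one₀ hs0.le hs1 (Nat.succ_ne_zero k)
    have h1a : (1 : ℝ) - a ^ 2 ≠ 0 := by nlinarith
    have h1s : (1 : ℝ) - s ^ 4 ≠ 0 := by nlinarith
    have hfac : (1 : ℝ) - a ^ 4 = (1 - a ^ 2) * (1 + a ^ 2) := by ring
    rw [hfac]
    field_simp
    ring
  -- series
  have hnorm : ‖s‖ < 1 := by rw [Real.norm_eq_abs, abs_of_pos hs0]; exact hs1
  have hnorm3 : ‖s ^ 3‖ < 1 := by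
    rw [norm_pow]
    exact pow_lt_one₀ (norm_nonneg s) hnorm (by norm_num)
  have h1 : HasSum (fun k : ℕ => ((k : ℝ) + 1) * s ^ (k + 1)) (s / (1 - s) ^ 2) := by
    have h := hasSum_coe_mul_geometric_of_norm_lt_one hnorm
    have h' : HasSum (fun n : ℕ => ((n + 1 : ℕ) : ℝ) * s ^ (n + 1)) (s / (1 - s) ^ 2) := by
      refine (hasSum_nat_add_iff (f := fun n : ℕ => (n : ℝ) * s ^ n) 1).mpr ?_
      simpa using h
    simpa [Nat.cast_add] using h'
  have h3 : HasSum (fun k : ℕ => ((k : ℝ) + 1) * (s ^ 3) ^ (k + 1))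
      ((s ^ 3) / (1 - s ^ 3) ^ 2) := by
    have h := hasSum_coe_mul_geometric_of_norm_lt_one hnorm3
    have h' : HasSum (fun n : ℕ => ((n + 1 : ℕ) : ℝ) * (s ^ 3) ^ (n + 1))
        ((s ^ 3) / (1 - s ^ 3) ^ 2) := by
      refine (hasSum_nat_add_iff (f := fun n : ℕ => (n : ℝ) * (s ^ 3) ^ n) 1).mpr ?_
      simpa using h
    simpa [Nat.cast_add] using h'
  have hsum := (h1.add h3).mul_left (1 / (q⁻¹ - q))
  rw [hs3, funext hterm]
  exact hsum
end

section
/- Let H be a Hilbert space with orthonormal basis indexed by (l,m,n), 2l ∈ ℕ∪{0}, m,n ∈ {−l,…,l}, and 0 < q < 1. The coefficient α⁺_{lmn} = q^{(2l+m+n+1)/2}·( [l−m+1]_q [l−n+1]_q / ([2l+1]_q [2l+2]_q) )^{1/2}, where [z]_q = (q^z − q^{−z})/(q−q^{−1}), satisfies the bound α⁺_{lmn}·q^{−n} ≤ C₁·q^{l} for a constant C₁ > 0 independent of l, m, n; consequently Σ_{l∈½ℕ∪{0}} Σ_{m,n=−l}^{l} α⁺_{lmn} q^{−n} < ∞. 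-/
/-- Index set of the corepresentation basis `ξ^l_{mn}` of quantum SU(2):
`k = 2l` and `i, j ∈ {0,…,k}` encode `m = l − i`, `n = l − j`. -/
def QIdx19 : Type := Σ k : ℕ, Fin (k + 1) × Fin (k + 1)

/-- The symmetric q-integer `[m]_q = (q^m − q^{−m})/(q − q^{−1})`. -/
noncomputable def qint19 (q : ℝ) (m : ℕ) : ℝ := (q ^ (m : ℤ) - q ^ (-(m : ℤ))) / (q - q⁻¹)

/-- The coefficient `α⁺_{lmn} = q^{(2l+m+n+1)/2}·([l−m+1]_q[l−n+1]_q/([2l+1]_q[2l+2]_q))^{1/2}`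
in the coordinates `l = k/2`, `m = l − i`, `n = l − j`. -/
noncomputable def alphaPlus (q : ℝ) (k i j : ℕ) : ℝ :=
  q ^ ((2 * (k : ℝ) - (i : ℝ) - (j : ℝ) + 1) / 2) *
    Real.sqrt (qint19 q (i + 1) * qint19 q (j + 1) / (qint19 q (k + 1) * qint19 q (k + 2)))

lemma qint_eq {q : ℝ} (hq0 : 0 < q) (hq1 : q < 1) (m : ℕ) :
    qint19 q m = q * (1 - q ^ (2 * m)) / (q ^ m * (1 - q ^ 2)) := by
  have hq : q ≠ 0 := ne_of_gt hq0
  have hinv : 1 < q⁻¹ := (one_lt_inv₀ hq0).mpr hq1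
  have h1 : q - q⁻¹ ≠ 0 := by nlinarith
  have hd : q ^ m * (1 - q ^ 2) ≠ 0 := by
    have : (0:ℝ) < 1 - q ^ 2 := by nlinarith
    positivity
  unfold qint19
  rw [zpow_natCast, zpow_neg, zpow_natCast, div_eq_div_iff h1 hd]
  field_simp
  ring
lemma qd_pos {q : ℝ} (hq0 : 0 < q) (hq1 : q < 1) : 0 < 1 - q ^ 2 := by nlinarith
lemma qint_pos {q : ℝ} (hq0 : 0 < q) (hq1 : q < 1) (m : ℕ) : 0 < qint19 q (m + 1) := by
  rw [qint_eq hq0 hq1]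
  have h1 : q ^ (2 * (m + 1)) < 1 := pow_lt_one₀ hq0.le hq1 (by omega)
  have h2 := qd_pos hq0 hq1
  apply div_pos (by nlinarith) (mul_pos (pow_pos hq0 _) h2)
lemma qint_le {q : ℝ} (hq0 : 0 < q) (hq1 : q < 1) (m : ℕ) :
    qint19 q (m + 1) ≤ 1 / (q ^ m * (1 - q ^ 2)) := by
  rw [qint_eq hq0 hq1]
  have h2 := qd_pos hq0 hq1
  have hm : (0:ℝ) < q ^ m := pow_pos hq0 m
  have hX : (0:ℝ) ≤ q ^ (2 * (m + 1)) := by positivity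
  rw [div_le_div_iff₀ (by positivity) (by positivity)]
  have hpow : q ^ (m + 1) = q ^ m * q := pow_succ q m
  nlinarith [mul_pos hm h2, mul_nonneg (mul_nonneg hm.le h2.le) hX]
lemma qint_ge {q : ℝ} (hq0 : 0 < q) (hq1 : q < 1) (k : ℕ) :
    1 / q ^ k ≤ qint19 q (k + 1) := by
  rw [qint_eq hq0 hq1]
  have h2 := qd_pos hq0 hq1
  have hm : (0:ℝ) < q ^ k := pow_pos hq0 k
  have hle : q ^ (2 * (k + 1)) ≤ q ^ 2 := pow_le_pow_of_le_one hq0.le hq1.le (by omega)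
  rw [div_le_div_iff₀ (by positivity) (by positivity)]
  have hpow : q ^ (k + 1) = q ^ k * q := pow_succ q k
  nlinarith [mul_pos hm hq0]
lemma ratio_le {q : ℝ} (hq0 : 0 < q) (hq1 : q < 1) (k i j : ℕ) :
    qint19 q (i + 1) * qint19 q (j + 1) / (qint19 q (k + 1) * qint19 q (k + 2)) ≤
      q ^ (2 * k + 1) / (q ^ i * q ^ j * (1 - q ^ 2) ^ 2) := by
  have hd := qd_pos hq0 hq1
  have h1 : qint19 q (i + 1) * qint19 q (j + 1) ≤
      1 / (q ^ i * (1 - q ^ 2)) * (1 / (q ^ j * (1 - q ^ 2))) := by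
    apply mul_le_mul (qint_le hq0 hq1 i) (qint_le hq0 hq1 j) (qint_pos hq0 hq1 j).le
    positivity
  have h2 : 1 / q ^ k * (1 / q ^ (k + 1)) ≤ qint19 q (k + 1) * qint19 q (k + 2) := by
    apply mul_le_mul (qint_ge hq0 hq1 k) (qint_ge hq0 hq1 (k + 1)) (by positivity)
      (qint_pos hq0 hq1 k).le
  calc qint19 q (i + 1) * qint19 q (j + 1) / (qint19 q (k + 1) * qint19 q (k + 2))
      ≤ (1 / (q ^ i * (1 - q ^ 2)) * (1 / (q ^ j * (1 - q ^ 2)))) /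
        (1 / q ^ k * (1 / q ^ (k + 1))) := by
        apply div_le_div₀ (by positivity) h1 (by positivity) h2
    _ = q ^ (2 * k + 1) / (q ^ i * q ^ j * (1 - q ^ 2) ^ 2) := by
        have hq : q ≠ 0 := ne_of_gt hq0
        have hd' : (1 - q ^ 2) ≠ 0 := ne_of_gt hd
        field_simp
        ring
lemma alpha_mul_bound {q : ℝ} (hq0 : 0 < q) (hq1 : q < 1) (k i j : ℕ)
    (hi : i ≤ k) (hj : j ≤ k) :
    alphaPlus q k i j * q ^ ((j : ℝ) - (k : ℝ) / 2) ≤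
      (q / (1 - q ^ 2)) * q ^ ((k : ℝ) / 2) := by
  have hd := qd_pos hq0 hq1
  set e : ℝ := (2 * (k : ℝ) - (i : ℝ) - (j : ℝ) + 1) / 2 with he
  have key : q ^ (2 * k + 1) / (q ^ i * q ^ j * (1 - q ^ 2) ^ 2) = (q ^ e / (1 - q ^ 2)) ^ 2 := by
    have h1 : (q ^ e) ^ 2 = q ^ (e * 2) := by
      rw [← Real.rpow_natCast (q ^ e) 2, ← Real.rpow_mul hq0.le]
      try norm_num
    have h2 : q ^ (e * 2) = q ^ ((2 * k + 1 : ℕ) : ℝ) * q ^ (-(i : ℝ)) * q ^ (-(j : ℝ)) := by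
      rw [← Real.rpow_add hq0, ← Real.rpow_add hq0]
      congr 1
      push_cast
      ring
    rw [div_pow, h1, h2, Real.rpow_natCast, Real.rpow_neg hq0.le, Real.rpow_neg hq0.le,
      Real.rpow_natCast, Real.rpow_natCast]
    field_simp
    try ring
  have hsqrt : Real.sqrt (qint19 q (i + 1) * qint19 q (j + 1) /
      (qint19 q (k + 1) * qint19 q (k + 2))) ≤ q ^ e / (1 - q ^ 2) := by
    have := Real.sqrt_le_sqrt ((ratio_le hq0 hq1 k i j).trans_eq key)
    rwa [Real.sqrt_sq (by positivity)] at this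
  have hP : (0:ℝ) < q ^ ((j : ℝ) - (k : ℝ) / 2) := Real.rpow_pos_of_pos hq0 _
  have hE : (0:ℝ) < q ^ e := Real.rpow_pos_of_pos hq0 _
  have step1 : alphaPlus q k i j * q ^ ((j : ℝ) - (k : ℝ) / 2) ≤
      (q ^ e * (q ^ e / (1 - q ^ 2))) * q ^ ((j : ℝ) - (k : ℝ) / 2) := by
    unfold alphaPlus
    rw [← he]
    have := mul_le_mul_of_nonneg_left hsqrt hE.le
    exact mul_le_mul_of_nonneg_right this hP.le
  have step2 : (q ^ e * (q ^ e / (1 - q ^ 2))) * q ^ ((j : ℝ) - (k : ℝ) / 2) =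
      q ^ (e + e + ((j : ℝ) - (k : ℝ) / 2)) / (1 - q ^ 2) := by
    rw [Real.rpow_add hq0, Real.rpow_add hq0]
    ring
  have hexp : (k : ℝ) / 2 + 1 ≤ e + e + ((j : ℝ) - (k : ℝ) / 2) := by
    have : (i : ℝ) ≤ (k : ℝ) := by exact_mod_cast hi
    rw [he]; linarith
  have step3 : q ^ (e + e + ((j : ℝ) - (k : ℝ) / 2)) ≤ q ^ ((k : ℝ) / 2 + 1) :=
    Real.rpow_le_rpow_of_exponent_ge hq0 hq1.le hexp
  have step4 : q ^ ((k : ℝ) / 2 + 1) = q * q ^ ((k : ℝ) / 2) := by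
    rw [Real.rpow_add hq0, Real.rpow_one]; ring
  calc alphaPlus q k i j * q ^ ((j : ℝ) - (k : ℝ) / 2)
      ≤ q ^ (e + e + ((j : ℝ) - (k : ℝ) / 2)) / (1 - q ^ 2) := step1.trans_eq step2
    _ ≤ q ^ ((k : ℝ) / 2 + 1) / (1 - q ^ 2) := by
        exact div_le_div_of_nonneg_right step3 hd.le
    _ = (q / (1 - q ^ 2)) * q ^ ((k : ℝ) / 2) := by rw [step4]; ring
lemma alpha_nonneg {q : ℝ} (hq0 : 0 < q) (k i j : ℕ) : 0 ≤ alphaPlus q k i j :=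
  mul_nonneg (Real.rpow_nonneg hq0.le _) (Real.sqrt_nonneg _)
lemma half_pow {q : ℝ} (hq0 : 0 < q) (k : ℕ) : q ^ ((k : ℝ) / 2) = (Real.sqrt q) ^ k := by
  rw [Real.sqrt_eq_rpow, ← Real.rpow_natCast (q ^ ((1:ℝ)/2)) k, ← Real.rpow_mul hq0.le]
  congr 1
  ring

/-- there is a constant `C₁ > 0`, independent of `l, m, n`, with
`α⁺_{lmn}·q^{−n} ≤ C₁·q^l`; consequently `Σ_{l,m,n} α⁺_{lmn} q^{−n} < ∞`. -/
theorem stmt_19 (q : ℝ) (hq0 : 0 < q) (hq1 : q < 1) :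
    (∃ C₁ : ℝ, 0 < C₁ ∧ ∀ (k : ℕ) (i j : Fin (k + 1)),
      alphaPlus q k i j * q ^ ((j : ℝ) - (k : ℝ) / 2) ≤ C₁ * q ^ ((k : ℝ) / 2)) ∧
    Summable (fun s : QIdx19 =>
      alphaPlus q s.1 s.2.1 s.2.2 * q ^ ((s.2.2 : ℝ) - (s.1 : ℝ) / 2)) := by
  have hd := qd_pos hq0 hq1
  set C₁ : ℝ := q / (1 - q ^ 2) with hC
  have hC₁ : 0 < C₁ := div_pos hq0 hd
  have hbound : ∀ (k : ℕ) (i j : Fin (k + 1)),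
      alphaPlus q k i j * q ^ ((j : ℝ) - (k : ℝ) / 2) ≤ C₁ * q ^ ((k : ℝ) / 2) := by
    intro k i j
    exact alpha_mul_bound hq0 hq1 k i j (Nat.lt_succ_iff.mp i.isLt) (Nat.lt_succ_iff.mp j.isLt)
  refine ⟨⟨C₁, hC₁, hbound⟩, ?_⟩
  set r : ℝ := Real.sqrt q with hr
  have hr0 : 0 < r := Real.sqrt_pos.mpr hq0
  have hr1 : r < 1 := by
    rw [hr, show (1:ℝ) = Real.sqrt 1 by simp]
    exact Real.sqrt_lt_sqrt hq0.le hq1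
  show Summable (fun s : Σ k : ℕ, Fin (k + 1) × Fin (k + 1) =>
      alphaPlus q s.1 s.2.1 s.2.2 * q ^ ((s.2.2 : ℝ) - (s.1 : ℝ) / 2))
  set f : (Σ k : ℕ, Fin (k + 1) × Fin (k + 1)) → ℝ :=
    fun s => alphaPlus q s.1 s.2.1 s.2.2 * q ^ ((s.2.2 : ℝ) - (s.1 : ℝ) / 2) with hf
  have hfnn : ∀ s, 0 ≤ f s := fun s =>
    mul_nonneg (alpha_nonneg hq0 _ _ _) (Real.rpow_pos_of_pos hq0 _).le
  rw [summable_sigma_of_nonneg hfnn]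
  constructor
  · intro k
    exact Summable.of_finite
  · have hfib : ∀ k : ℕ, (∑' p : Fin (k + 1) × Fin (k + 1), f ⟨k, p⟩) ≤
        ((k : ℝ) + 1) ^ 2 * (C₁ * r ^ k) := by
      intro k
      rw [tsum_fintype]
      calc ∑ p : Fin (k + 1) × Fin (k + 1), f ⟨k, p⟩
          ≤ ∑ _p : Fin (k + 1) × Fin (k + 1), C₁ * q ^ ((k : ℝ) / 2) :=
            Finset.sum_le_sum (fun p _ => hbound k p.1 p.2)
        _ = ((k : ℝ) + 1) ^ 2 * (C₁ * r ^ k) := by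
            rw [Finset.sum_const, Finset.card_univ]
            simp only [Fintype.card_prod, Fintype.card_fin, nsmul_eq_mul]
            rw [half_pow hq0, ← hr]
            push_cast
            ring
    apply Summable.of_nonneg_of_le (fun k => tsum_nonneg (fun p => hfnn ⟨k, p⟩)) hfib
    have hnorm : ‖r‖ < 1 := by rw [Real.norm_eq_abs, abs_of_pos hr0]; exact hr1
    have h2 : Summable (fun k : ℕ => (k : ℝ) ^ 2 * r ^ k) :=
      summable_pow_mul_geometric_of_norm_lt_one 2 hnorm
    have h1 : Summable (fun k : ℕ => (k : ℝ) ^ 1 * r ^ k) :=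
      summable_pow_mul_geometric_of_norm_lt_one 1 hnorm
    have h0 : Summable (fun k : ℕ => r ^ k) := summable_geometric_of_lt_one hr0.le hr1
    have := (((h2.add (h1.mul_left 2)).add h0).mul_left C₁)
    apply this.congr
    intro k
    push_cast
    ring
end
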